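/- arXiv:1804.11292 — 2 statements merged into one kernel-verified Lean document; each statement's English description precedes it below -/
import Mathlib

section
/- Let Γ act properly discontinuously on a manifold M and let η be a Γ-invariant differential form with Γ-compact support (π(supp η) compact in M/Γ). If φ is a cutoff function (smooth, ∑_{γ∈Γ} φ∘γ = 1, and supp(φ) ∩ π⁻¹(B) compact for every compact B ⊆ M/Γ), then φη has compact support and m(φη) = ∑_{γ∈Γ} γ*(φη) = η. Hence the average operator m : Ω_c(M) → Ω(M)^Γ_{Γc} is surjective. -/
open scoped Manifold

/-
Pulling back commutes with multiplication by functions, so `γ*(φη) = (φ ∘ γ) · γ*η = (φ ∘ γ) · η`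
by invariance of `η`, and summing over `Γ` gives `(∑_γ φ ∘ γ) · η = η`. The support of `φη`
is a closed subset of `supp φ ∩ π⁻¹(π(supp η))`, which is compact by the cutoff property
applied to the compact set `π(supp η)`.
-/

/-- Pullback of a `p`-form on `M` by the diffeomorphism given by `γ ∈ Γ`:
`(γ*ω)(x) = ω(γ•x) ∘ (d(γ•·)_x, …, d(γ•·)_x)`. -/
noncomputable def pullForm
    {E : Type*} [NormedAddCommGroup E] [NormedSpace ℝ E]
    {H : Type*} [TopologicalSpace H] (I : ModelWithCorners ℝ E H)
    {M : Type*} [TopologicalSpace M] [ChartedSpace H M]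
    {Γ : Type*} [Group Γ] [MulAction Γ M] {p : ℕ}
    (γ : Γ) (ω : M → (E [⋀^Fin p]→L[ℝ] ℝ)) : M → (E [⋀^Fin p]→L[ℝ] ℝ) :=
  fun x => (ω (γ • x)).compContinuousLinearMap (mfderiv I I (fun y : M => γ • y) x)

/-- A `p`-form on `M` (a family of continuous alternating `p`-linear maps on the tangent
spaces) is smooth if it is smooth as a map into continuous multilinear maps. -/
def SmoothForm
    {E : Type*} [NormedAddCommGroup E] [NormedSpace ℝ E]
    {H : Type*} [TopologicalSpace H] (I : ModelWithCorners ℝ E H)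
    {M : Type*} [TopologicalSpace M] [ChartedSpace H M] {p : ℕ}
    (ω : M → (E [⋀^Fin p]→L[ℝ] ℝ)) : Prop :=
  ContMDiff I 𝓘(ℝ, ContinuousMultilinearMap ℝ (fun _ : Fin p => E) ℝ) (⊤ : ℕ∞)
    (fun x => (ω x).toContinuousMultilinearMap)

theorem hasCompactSupport_smul_of_isCompact_inter_preimage_image
    {M Q R F : Type*} [TopologicalSpace M] [TopologicalSpace Q]
    [Zero R] [Zero F] [SMulWithZero R F] (π : M → Q) (φ : M → R) (η : M → F)
    (hK : IsCompact (tsupport φ ∩ π ⁻¹' (π '' tsupport η))) :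
    HasCompactSupport (fun x => φ x • η x) :=
  hK.of_isClosed_subset (isClosed_tsupport _) fun _ hx =>
    ⟨tsupport_smul_subset_left φ η hx,
      Set.subset_preimage_image _ _ (tsupport_smul_subset_right φ η hx)⟩

section

variable {E : Type*} [NormedAddCommGroup E] [NormedSpace ℝ E]
  {H : Type*} [TopologicalSpace H] (I : ModelWithCorners ℝ E H)
  {M : Type*} [TopologicalSpace M] [ChartedSpace H M]
  {Γ : Type*} [Group Γ] [MulAction Γ M] {p : ℕ}

theorem pullForm_smul
    (γ : Γ) (f : M → ℝ) (ω : M → (E [⋀^Fin p]→L[ℝ] ℝ)) (x : M) :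
    pullForm I γ (fun y => f y • ω y) x = f (γ • x) • pullForm I γ ω x :=
  rfl

theorem hasSum_pullForm_smul_of_invariant
    (η : M → (E [⋀^Fin p]→L[ℝ] ℝ)) (hinv : ∀ γ : Γ, pullForm I γ η = η)
    (φ : M → ℝ) (x : M) (hφsum : HasSum (fun γ : Γ => φ (γ • x)) 1) (v : Fin p → E) :
    HasSum (fun γ : Γ => pullForm I γ (fun y => φ y • η y) x v) (η x v) := by
  simp only [pullForm_smul, hinv, ContinuousAlternatingMap.smul_apply, smul_eq_mul]
  simpa using hφsum.mul_right (η x v)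

end

theorem average_surjective_general
    {E : Type*} [NormedAddCommGroup E] [NormedSpace ℝ E]
    {H : Type*} [TopologicalSpace H] (I : ModelWithCorners ℝ E H)
    {M : Type*} [TopologicalSpace M] [ChartedSpace H M]
    {Γ : Type*} [Group Γ] [MulAction Γ M]
    {p : ℕ} (η : M → (E [⋀^Fin p]→L[ℝ] ℝ))
    (hinv : ∀ γ : Γ, pullForm I γ η = η)
    (hΓc : IsCompact (Quotient.mk (MulAction.orbitRel Γ M) '' tsupport η))
    (φ : M → ℝ)
    (hφsum : ∀ x : M, HasSum (fun γ : Γ => φ (γ • x)) 1)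
    (hφsupp : ∀ B : Set (Quotient (MulAction.orbitRel Γ M)), IsCompact B →
      IsCompact (tsupport φ ∩ (Quotient.mk (MulAction.orbitRel Γ M)) ⁻¹' B)) :
    HasCompactSupport (fun x => φ x • η x) ∧
    ∀ (x : M) (v : Fin p → E),
      HasSum (fun γ : Γ => pullForm I γ (fun y => φ y • η y) x v) (η x v) :=
  ⟨hasCompactSupport_smul_of_isCompact_inter_preimage_image _ φ η (hφsupp _ hΓc),
    fun x => hasSum_pullForm_smul_of_invariant I η hinv φ x (hφsum x)⟩

/-- if `η` is a `Γ`-invariant form with `Γ`-compact support and `φ` is a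
cutoff function, then `φη` has compact support and `m(φη) = ∑_γ γ*(φη) = η`; hence the
average operator `m : Ω_c(M) → Ω(M)^Γ_{Γc}` is surjective. -/
theorem average_surjective
    {E : Type*} [NormedAddCommGroup E] [NormedSpace ℝ E]
    {H : Type*} [TopologicalSpace H] (I : ModelWithCorners ℝ E H)
    {M : Type*} [TopologicalSpace M] [ChartedSpace H M] [IsManifold I (⊤ : ℕ∞) M]
    {Γ : Type*} [Group Γ] [MulAction Γ M]
    (hsmoothact : ∀ γ : Γ, ContMDiff I I (⊤ : ℕ∞) (fun x : M => γ • x))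
    (hpd : ∀ K : Set M, IsCompact K →
      {γ : Γ | ((fun x : M => γ • x) '' K ∩ K).Nonempty}.Finite)
    {p : ℕ} (η : M → (E [⋀^Fin p]→L[ℝ] ℝ)) (hη : SmoothForm I η)
    (hinv : ∀ γ : Γ, pullForm I γ η = η)
    (hΓc : IsCompact (Quotient.mk (MulAction.orbitRel Γ M) '' tsupport η))
    (φ : M → ℝ) (hφ : ContMDiff I 𝓘(ℝ, ℝ) (⊤ : ℕ∞) φ) (hφ0 : ∀ x, 0 ≤ φ x)
    (hφsum : ∀ x : M, HasSum (fun γ : Γ => φ (γ • x)) 1)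
    (hφsupp : ∀ B : Set (Quotient (MulAction.orbitRel Γ M)), IsCompact B →
      IsCompact (tsupport φ ∩ (Quotient.mk (MulAction.orbitRel Γ M)) ⁻¹' B)) :
    HasCompactSupport (fun x => φ x • η x) ∧
    ∀ (x : M) (v : Fin p → E),
      HasSum (fun γ : Γ => pullForm I γ (fun y => φ y • η y) x v) (η x v) :=
  average_surjective_general I η hinv hΓc φ hφsum hφsupp
end

section
/- Let Γ act properly discontinuously on a connected non-compact manifold M with M/Γ compact, and let φ be a compactly supported cutoff function (∑_{γ∈Γ} φ∘γ = 1). Then dφ is a coinvariant compactly supported 1-form (m(dφ) = 0) and its class θ_Γ = [dφ] in H^1(Ω_c(M)_Γ) is nonzero: there is no compactly supported coinvariant function ξ with φ − ξ constant. -/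
/-!
Near any point only finitely many translates of `φ` are nonzero: some translate `φ (γ₀ • ·)` is
nonzero there, its support has compact closure, and the action is properly discontinuous. Hence
`∑_γ d(φ (γ • ·))` is the derivative of the locally finite sum `∑_γ φ (γ • ·) = 1`, which vanishes.
Every `g - g (γ • ·)` with `g` compactly supported is compactly supported with vanishing orbit
sums, and so is every `ξ` in their span. If `φ - ξ = c`, then `c = 0` since `M` is noncompact,
and the orbit sums of `φ = ξ` would be both `1` and `0`.
-/

open scoped Manifold Topology
open Function Set Filter

section ProperlyDiscontinuous

variable {Γ M : Type*} [TopologicalSpace M]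

theorem ProperlyDiscontinuousSMul.of_finite_inter_self [SMul Γ M]
    (h : ∀ K : Set M, IsCompact K → {γ : Γ | ((γ • ·) '' K ∩ K).Nonempty}.Finite) :
    ProperlyDiscontinuousSMul Γ M where
  finite_disjoint_inter_image hK hL :=
    (h _ (hK.union hL)).subset fun _ ⟨_, ⟨y, hy, hyx⟩, hyL⟩ =>
      ⟨_, ⟨y, Or.inl hy, hyx⟩, Or.inr hyL⟩

theorem finite_setOf_smul_mem [SMul Γ M] [ProperlyDiscontinuousSMul Γ M] {K : Set M}
    (hK : IsCompact K) (x : M) : {γ : Γ | γ • x ∈ K}.Finite :=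
  (ProperlyDiscontinuousSMul.finite_disjoint_inter_image isCompact_singleton hK).subset
    fun γ hγ => ⟨γ • x, mem_image_of_mem _ rfl, hγ⟩

theorem HasCompactSupport.finite_support_comp_smul [SMul Γ M] [ProperlyDiscontinuousSMul Γ M]
    {R : Type*} [Zero R] {f : M → R} (hf : HasCompactSupport f) (x : M) :
    (support fun γ : Γ => f (γ • x)).Finite :=
  (finite_setOf_smul_mem hf x).subset fun _ hγ => subset_tsupport f hγ

variable [Group Γ] [MulAction Γ M] [ContinuousConstSMul Γ M] [ProperlyDiscontinuousSMul Γ M]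

theorem locallyFinite_support_comp_smul {R : Type*} [Zero R] [TopologicalSpace R] [T1Space R]
    {φ : M → R} (hφ : Continuous φ) (hφc : HasCompactSupport φ)
    (hcover : ∀ x, ∃ γ : Γ, φ (γ • x) ≠ 0) :
    LocallyFinite fun γ : Γ => support fun y => φ (γ • y) := by
  intro x
  obtain ⟨γ₀, hγ₀⟩ := hcover x
  refine ⟨(γ₀ • ·) ⁻¹' support φ,
    (hφ.isOpen_support.preimage (continuous_const_smul γ₀)).mem_nhds hγ₀, ?_⟩
  refine (ProperlyDiscontinuousSMul.finite_disjoint_inter_image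
    (hφc.preimage_smul γ₀) hφc).subset ?_
  rintro γ ⟨y, hyγ, hy₀⟩
  exact ⟨γ • y, mem_image_of_mem _ (subset_tsupport _ hy₀), subset_tsupport _ hyγ⟩

end ProperlyDiscontinuous

def orbitSumKernel (Γ M : Type*) [SMul Γ M] [TopologicalSpace M] : Submodule ℝ (M → ℝ) where
  carrier := {f | HasCompactSupport f ∧ ∀ x, HasSum (fun γ : Γ => f (γ • x)) 0}
  zero_mem' := ⟨.zero, fun _ => hasSum_zero⟩
  add_mem' := fun ⟨hfc, hf⟩ ⟨hgc, hg⟩ =>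
    ⟨hfc.add hgc, fun x => by simpa using (hf x).add (hg x)⟩
  smul_mem' a _ := fun ⟨hfc, hf⟩ => ⟨hfc.smul_left, fun x => by simpa using (hf x).mul_left a⟩

section OrbitSumKernel

variable {Γ M : Type*} [TopologicalSpace M] [Group Γ] [MulAction Γ M]

theorem sub_comp_smul_mem_orbitSumKernel [ContinuousConstSMul Γ M]
    [ProperlyDiscontinuousSMul Γ M] {g : M → ℝ} (hg : HasCompactSupport g) (γ₀ : Γ) :
    (g - fun x => g (γ₀ • x)) ∈ orbitSumKernel Γ M := by
  refine ⟨hg.sub (hg.comp_homeomorph (Homeomorph.smul γ₀)), fun x => ?_⟩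
  have hsum : HasSum (fun γ : Γ => g (γ • x)) (∑' γ : Γ, g (γ • x)) :=
    (summable_of_hasFiniteSupport (hg.finite_support_comp_smul x)).hasSum
  simpa [mul_smul] using hsum.sub ((Equiv.mulLeft γ₀).hasSum_iff.mpr hsum)

theorem not_exists_mem_orbitSumKernel_sub_eq_const [NoncompactSpace M] {φ : M → ℝ}
    (hφc : HasCompactSupport φ) (hφsum : ∀ x, HasSum (fun γ : Γ => φ (γ • x)) 1) :
    ¬ ∃ ξ ∈ orbitSumKernel Γ M, ∃ c : ℝ, ∀ x, φ x - ξ x = c := by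
  rintro ⟨ξ, ⟨hξc, hξ⟩, c, hc⟩
  obtain ⟨x₀, hx₀⟩ := (ne_univ_iff_exists_notMem _).mp (hφc.union hξc).ne_univ
  have hc0 : c = 0 := by
    rw [← hc x₀, image_eq_zero_of_notMem_tsupport fun h => hx₀ (Or.inl h),
      image_eq_zero_of_notMem_tsupport fun h => hx₀ (Or.inr h), sub_zero]
  have hφξ : φ = ξ := funext fun x => sub_eq_zero.mp ((hc x).trans hc0)
  exact one_ne_zero ((hφsum x₀).unique (hφξ ▸ hξ x₀))

end OrbitSumKernel

section LocallyFiniteSum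

variable {𝕜 E H M F ι : Type*} [NontriviallyNormedField 𝕜] [NormedAddCommGroup E]
  [NormedSpace 𝕜 E] [TopologicalSpace H] {I : ModelWithCorners 𝕜 E H} [TopologicalSpace M]
  [ChartedSpace H M] [NormedAddCommGroup F] [NormedSpace 𝕜 F]

-- Mathlib's `HasMFDerivAt.sum` only allows index types in `Type`.
theorem hasMFDerivAt_finsetSum {f : ι → M → F} {x : M} {f' : ι → TangentSpace I x →L[𝕜] F}
    (s : Finset ι) (hf : ∀ i ∈ s, HasMFDerivAt I 𝓘(𝕜, F) (f i) x (f' i)) :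
    HasMFDerivAt I 𝓘(𝕜, F) (∑ i ∈ s, f i) x (∑ i ∈ s, f' i) := by
  classical
  induction s using Finset.induction_on with
  | empty => simpa using! hasMFDerivAt_const (I := I) (I' := 𝓘(𝕜, F)) (0 : F) x
  | insert i s hi IH =>
    rw [Finset.sum_insert hi]
    exact ((hf i (Finset.mem_insert_self i s)).add
      (IH fun j hj => hf j (Finset.mem_insert_of_mem hj))).congr_mfderiv
      (Finset.sum_insert hi).symm

theorem LocallyFinite.hasSum_mfderiv_apply_eq_zero {f : ι → M → F} {c : F}
    (hlf : LocallyFinite fun i => support (f i)) {x : M}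
    (hf : ∀ i, MDifferentiableAt I 𝓘(𝕜, F) (f i) x)
    (hsum : ∀ y, HasSum (fun i => f i y) c) (v : TangentSpace I x) :
    HasSum (fun i => mfderiv I 𝓘(𝕜, F) (f i) x v) 0 := by
  obtain ⟨U, hU, hfin⟩ := hlf x
  set T := hfin.toFinset
  have hvanish : ∀ i ∉ T, ∀ y ∈ U, f i y = 0 := fun i hi y hy =>
    by_contra fun hne => hi (hfin.mem_toFinset.mpr ⟨y, hne, hy⟩)
  have hconst : (fun y => ∑ i ∈ T, f i y) =ᶠ[𝓝 x] fun _ => c :=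
    eventually_of_mem hU fun y hy =>
      (hasSum_sum_of_ne_finset_zero fun i hi => hvanish i hi y hy).unique (hsum y)
  have hT : ∑ i ∈ T, mfderiv I 𝓘(𝕜, F) (f i) x v = 0 := by
    have hsum_deriv := hasMFDerivAt_finsetSum T fun i _ => (hf i).hasMFDerivAt
    have hzero := (hasMFDerivAt_const (I := I) (I' := 𝓘(𝕜, F)) c x).congr_of_eventuallyEq hconst
    rw [Finset.sum_fn] at hsum_deriv
    have h := congrArg (fun L => L v) (hsum_deriv.mfderiv.symm.trans hzero.mfderiv)
    exact (sum_apply _ _ v).symm.trans h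
  have hout : ∀ i ∉ T, mfderiv I 𝓘(𝕜, F) (f i) x v = 0 := fun i hi => by
    have : f i =ᶠ[𝓝 x] fun _ => (0 : F) := eventually_of_mem hU (hvanish i hi)
    rw [this.mfderiv_eq, mfderiv_const]
    rfl
  rw [← hT]
  exact hasSum_sum_of_ne_finset_zero hout

end LocallyFiniteSum

theorem cutoff_class_nonzero_general
    {E : Type*} [NormedAddCommGroup E] [NormedSpace ℝ E]
    {H : Type*} [TopologicalSpace H] (I : ModelWithCorners ℝ E H)
    {M : Type*} [TopologicalSpace M] [ChartedSpace H M]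
    [NoncompactSpace M]
    {Γ : Type*} [Group Γ] [MulAction Γ M]
    (hsmoothact : ∀ γ : Γ, ContMDiff I I (⊤ : ℕ∞) (fun x : M => γ • x))
    (hpd : ∀ K : Set M, IsCompact K →
      {γ : Γ | ((fun x : M => γ • x) '' K ∩ K).Nonempty}.Finite)
    (φ : M → ℝ) (hφ : ContMDiff I 𝓘(ℝ, ℝ) (⊤ : ℕ∞) φ) (hφc : HasCompactSupport φ)
    (hφsum : ∀ x : M, HasSum (fun γ : Γ => φ (γ • x)) 1) :
    (∀ (x : M) (v : TangentSpace I x),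
        HasSum (fun γ : Γ => mfderiv I 𝓘(ℝ, ℝ) (fun y => φ (γ • y)) x v) 0) ∧
    ¬ ∃ ξ ∈ Submodule.span ℝ {h : M → ℝ | ∃ (g : M → ℝ) (γ : Γ),
          ContMDiff I 𝓘(ℝ, ℝ) (⊤ : ℕ∞) g ∧ HasCompactSupport g ∧
          h = g - fun x => g (γ • x)},
        ∃ c : ℝ, ∀ x : M, φ x - ξ x = c := by
  have : ContinuousConstSMul Γ M := ⟨fun γ => (hsmoothact γ).continuous⟩
  have : ProperlyDiscontinuousSMul Γ M := .of_finite_inter_self hpd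
  refine ⟨fun x v => ?_, fun ⟨ξ, hξ, hconst⟩ => ?_⟩
  · have hcover : ∀ x, ∃ γ : Γ, φ (γ • x) ≠ 0 := fun x => by
      by_contra! h
      exact one_ne_zero ((hφsum x).unique (by simp [h]))
    exact (locallyFinite_support_comp_smul hφ.continuous hφc hcover).hasSum_mfderiv_apply_eq_zero
      (fun γ => (hφ.comp (hsmoothact γ)).mdifferentiableAt (by simp)) hφsum v
  · refine not_exists_mem_orbitSumKernel_sub_eq_const hφc hφsum
      ⟨ξ, Submodule.span_le.mpr ?_ hξ, hconst⟩
    rintro _ ⟨g, γ, -, hg, rfl⟩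
    exact sub_comp_smul_mem_orbitSumKernel hg γ

/-- on a connected non-compact manifold `M` with a properly discontinuous
action with compact quotient, for a compactly supported cutoff function `φ`
(`∑_γ φ∘γ = 1`), the 1-form `dφ` is coinvariant (`m(dφ) = 0`) and its class
`θ_Γ = [dφ] ∈ H¹(Ω_c(M)_Γ)` is nonzero: there is no compactly supported coinvariant
function `ξ` with `φ - ξ` constant. -/
theorem cutoff_class_nonzero
    {E : Type*} [NormedAddCommGroup E] [NormedSpace ℝ E]
    {H : Type*} [TopologicalSpace H] (I : ModelWithCorners ℝ E H)
    {M : Type*} [TopologicalSpace M] [ChartedSpace H M] [IsManifold I (⊤ : ℕ∞) M]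
    [ConnectedSpace M] [NoncompactSpace M]
    {Γ : Type*} [Group Γ] [MulAction Γ M]
    [CompactSpace (Quotient (MulAction.orbitRel Γ M))]
    (hsmoothact : ∀ γ : Γ, ContMDiff I I (⊤ : ℕ∞) (fun x : M => γ • x))
    (hpd : ∀ K : Set M, IsCompact K →
      {γ : Γ | ((fun x : M => γ • x) '' K ∩ K).Nonempty}.Finite)
    (φ : M → ℝ) (hφ : ContMDiff I 𝓘(ℝ, ℝ) (⊤ : ℕ∞) φ) (hφc : HasCompactSupport φ)
    (hφsum : ∀ x : M, HasSum (fun γ : Γ => φ (γ • x)) 1) :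
    (∀ (x : M) (v : TangentSpace I x),
        HasSum (fun γ : Γ => mfderiv I 𝓘(ℝ, ℝ) (fun y => φ (γ • y)) x v) 0) ∧
    ¬ ∃ ξ ∈ Submodule.span ℝ {h : M → ℝ | ∃ (g : M → ℝ) (γ : Γ),
          ContMDiff I 𝓘(ℝ, ℝ) (⊤ : ℕ∞) g ∧ HasCompactSupport g ∧
          h = g - fun x => g (γ • x)},
        ∃ c : ℝ, ∀ x : M, φ x - ξ x = c :=
  cutoff_class_nonzero_general I hsmoothact hpd φ hφ hφc hφsum
end
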